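/- Let Ŝ be the CHSH operator for the fixed observables A₀ = σx, A₁ = σz, B₀ = (σx+σz)/√2, B₁ = (σx−σz)/√2, and S(ρ) = Tr(ρŜ). Then: (i) for every 4×4 positive semidefinite matrix ρ with trace 1, −2√2 ≤ S(ρ) ≤ 2√2; (ii) S(|Φ⁺⟩⟨Φ⁺|) = 2√2; and (iii) S(|Ψ⁻⟩⟨Ψ⁻|) = −2√2. Hence the maximum and minimum of S over the set of two-qubit density matrices are attained at |Φ⁺⟩⟨Φ⁺| and |Ψ⁻⟩⟨Ψ⁻| respectively. -/

import Mathlib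

open Matrix Kronecker Complex ComplexOrder

noncomputable section

/-- Pauli X matrix. -/
def sigX : Matrix (Fin 2) (Fin 2) ℂ := !![0, 1; 1, 0]

/-- Pauli Z matrix. -/
def sigZ : Matrix (Fin 2) (Fin 2) ℂ := !![1, 0; 0, -1]

/-- Bob's observable `B₀ = (σx + σz)/√2`. -/
def Bob0 : Matrix (Fin 2) (Fin 2) ℂ := ((Real.sqrt 2 : ℂ))⁻¹ • (sigX + sigZ)

/-- Bob's observable `B₁ = (σx − σz)/√2`. -/
def Bob1 : Matrix (Fin 2) (Fin 2) ℂ := ((Real.sqrt 2 : ℂ))⁻¹ • (sigX - sigZ)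

/-- The CHSH operator `Ŝ = A₀⊗B₀ + A₁⊗B₀ + A₀⊗B₁ − A₁⊗B₁` with `A₀ = σx`, `A₁ = σz`. -/
def Shat : Matrix (Fin 2 × Fin 2) (Fin 2 × Fin 2) ℂ :=
  sigX ⊗ₖ Bob0 + sigZ ⊗ₖ Bob0 + sigX ⊗ₖ Bob1 - sigZ ⊗ₖ Bob1

/-- Bell state `|Φ⁺⟩ = (|00⟩ + |11⟩)/√2`. -/
def phiPlus : Fin 2 × Fin 2 → ℂ :=
  fun p => if p = (0, 0) ∨ p = (1, 1) then ((Real.sqrt 2 : ℂ))⁻¹ else 0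

/-- Bell state `|Ψ⁻⟩ = (|01⟩ − |10⟩)/√2`. -/
def psiMinus : Fin 2 × Fin 2 → ℂ :=
  fun p => if p = (0, 1) then ((Real.sqrt 2 : ℂ))⁻¹
    else if p = (1, 0) then -((Real.sqrt 2 : ℂ))⁻¹ else 0

/-- CHSH measure `S(ρ) = Tr(ρ Ŝ)` (a real number for Hermitian ρ). -/
def Smeas (ρ : Matrix (Fin 2 × Fin 2) (Fin 2 × Fin 2) ℂ) : ℝ :=
  ((ρ * Shat).trace).re

/-- Entanglement fidelity `F(ρ) = ⟨Φ⁺|ρ|Φ⁺⟩`. -/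
def Fent (ρ : Matrix (Fin 2 × Fin 2) (Fin 2 × Fin 2) ℂ) : ℝ :=
  (star phiPlus ⬝ᵥ ρ *ᵥ phiPlus).re

end

/-!
Since `B₀ + B₁ = √2 σx` and `B₀ - B₁ = √2 σz`, the CHSH operator collapses to
`Ŝ = √2 (σx ⊗ σx + σz ⊗ σz) = 2√2 (|Φ⁺⟩⟨Φ⁺| - |Ψ⁻⟩⟨Ψ⁻|)`, so
`S(ρ) = 2√2 (⟨Φ⁺|ρ|Φ⁺⟩ - ⟨Ψ⁻|ρ|Ψ⁻⟩)`. For a density matrix both expectations are nonnegative,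
and by completeness of the Bell basis they sum to at most `Tr ρ = 1`; hence `|S(ρ)| ≤ 2√2`.
Orthogonality of `Φ⁺` and `Ψ⁻` makes the two Bell projectors attain the bounds.
-/

namespace Matrix

theorem trace_mul_vecMulVec {n R : Type*} [Fintype n] [CommSemiring R]
    (A : Matrix n n R) (x y : n → R) :
    (A * vecMulVec x y).trace = y ⬝ᵥ A *ᵥ x := by
  rw [mul_vecMulVec, trace_vecMulVec, dotProduct_comm]

theorem star_dotProduct_vecMulVec_mulVec {n R : Type*} [Fintype n] [CommSemiring R]
    [StarRing R] (x a : n → R) :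
    star x ⬝ᵥ vecMulVec a (star a) *ᵥ x = (star x ⬝ᵥ a) * star (star x ⬝ᵥ a) := by
  rw [vecMulVec_mulVec, op_smul_eq_smul, dotProduct_smul, smul_eq_mul, mul_comm,
    ← star_dotProduct]

theorem kronecker_sub {l m n p α : Type*} [NonUnitalNonAssocRing α] (A : Matrix l m α)
    (B₁ B₂ : Matrix n p α) : A ⊗ₖ (B₁ - B₂) = A ⊗ₖ B₁ - A ⊗ₖ B₂ := by
  ext
  simp [mul_sub]

end Matrix

theorem inv_sqrt_two_mul_two : (√2 : ℂ)⁻¹ * 2 = √2 := by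
  have h : (√2 : ℂ) * √2 = 2 := by
    rw [← Complex.ofReal_mul, Real.mul_self_sqrt zero_le_two, Complex.ofReal_ofNat]
  have hne : (√2 : ℂ) ≠ 0 := by
    exact_mod_cast (Real.sqrt_pos.mpr zero_lt_two).ne'
  rw [← h, ← mul_assoc, inv_mul_cancel₀ hne, one_mul]

theorem Bob0_add_Bob1 : Bob0 + Bob1 = (√2 : ℂ) • sigX := by
  rw [Bob0, Bob1, ← smul_add, add_add_sub_cancel, ← two_smul ℂ, smul_smul,
    inv_sqrt_two_mul_two]

theorem Bob0_sub_Bob1 : Bob0 - Bob1 = (√2 : ℂ) • sigZ := by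
  rw [Bob0, Bob1, ← smul_sub, add_sub_sub_cancel, ← two_smul ℂ, smul_smul,
    inv_sqrt_two_mul_two]

theorem Shat_eq_sqrt_two_smul : Shat = (√2 : ℂ) • (sigX ⊗ₖ sigX + sigZ ⊗ₖ sigZ) := by
  rw [smul_add, ← kronecker_smul, ← kronecker_smul, ← Bob0_add_Bob1, ← Bob0_sub_Bob1,
    kronecker_add, kronecker_sub, Shat]
  abel

/- The Bell vectors scaled by `√2`, so that their entries are integers; `bellPhiPlus (i, j)` is
the `(i, j)` entry of the displayed matrix. -/

def bellPhiPlus : Fin 2 × Fin 2 → ℂ := fun p => !![1, 0; 0, 1] p.1 p.2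

def bellPsiMinus : Fin 2 × Fin 2 → ℂ := fun p => !![0, 1; -1, 0] p.1 p.2

def bellPhiMinus : Fin 2 × Fin 2 → ℂ := fun p => !![1, 0; 0, -1] p.1 p.2

def bellPsiPlus : Fin 2 × Fin 2 → ℂ := fun p => !![0, 1; 1, 0] p.1 p.2

theorem phiPlus_eq_inv_sqrt_two_smul : phiPlus = (√2 : ℂ)⁻¹ • bellPhiPlus := by
  ext ⟨i, j⟩
  fin_cases i <;> fin_cases j <;> simp [phiPlus, bellPhiPlus]

theorem psiMinus_eq_inv_sqrt_two_smul : psiMinus = (√2 : ℂ)⁻¹ • bellPsiMinus := by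
  ext ⟨i, j⟩
  fin_cases i <;> fin_cases j <;> simp [psiMinus, bellPsiMinus]

theorem star_bellPhiPlus_dotProduct_self : star bellPhiPlus ⬝ᵥ bellPhiPlus = 2 := by
  simp [bellPhiPlus, dotProduct, Fintype.sum_prod_type]
  norm_num

theorem star_bellPsiMinus_dotProduct_self : star bellPsiMinus ⬝ᵥ bellPsiMinus = 2 := by
  simp [bellPsiMinus, dotProduct, Fintype.sum_prod_type]
  norm_num

theorem star_bellPsiMinus_dotProduct_bellPhiPlus : star bellPsiMinus ⬝ᵥ bellPhiPlus = 0 := by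
  simp [bellPhiPlus, bellPsiMinus, dotProduct, Fintype.sum_prod_type]

theorem star_bellPhiPlus_dotProduct_bellPsiMinus : star bellPhiPlus ⬝ᵥ bellPsiMinus = 0 := by
  simp [bellPhiPlus, bellPsiMinus, dotProduct, Fintype.sum_prod_type]

theorem sigX_kronecker_sigX_add_sigZ_kronecker_sigZ :
    sigX ⊗ₖ sigX + sigZ ⊗ₖ sigZ =
      vecMulVec bellPhiPlus (star bellPhiPlus) - vecMulVec bellPsiMinus (star bellPsiMinus) := by
  ext ⟨i, j⟩ ⟨k, l⟩
  fin_cases i <;> fin_cases j <;> fin_cases k <;> fin_cases l <;>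
    simp [sigX, sigZ, bellPhiPlus, bellPsiMinus, vecMulVec_apply]

theorem bell_completeness :
    vecMulVec bellPhiPlus (star bellPhiPlus) + vecMulVec bellPsiMinus (star bellPsiMinus) +
      vecMulVec bellPhiMinus (star bellPhiMinus) + vecMulVec bellPsiPlus (star bellPsiPlus) =
      (2 : ℂ) • 1 := by
  ext ⟨i, j⟩ ⟨k, l⟩
  fin_cases i <;> fin_cases j <;> fin_cases k <;> fin_cases l <;>
    simp [bellPhiPlus, bellPsiMinus, bellPhiMinus, bellPsiPlus, vecMulVec_apply] <;>
    norm_num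

theorem sum_bell_dotProduct_mulVec_eq_two_mul_trace
    (ρ : Matrix (Fin 2 × Fin 2) (Fin 2 × Fin 2) ℂ) :
    star bellPhiPlus ⬝ᵥ ρ *ᵥ bellPhiPlus + star bellPsiMinus ⬝ᵥ ρ *ᵥ bellPsiMinus +
      star bellPhiMinus ⬝ᵥ ρ *ᵥ bellPhiMinus + star bellPsiPlus ⬝ᵥ ρ *ᵥ bellPsiPlus =
      2 * ρ.trace := by
  have h := congrArg (fun M => (ρ * M).trace) bell_completeness
  simpa only [mul_add, trace_add, trace_mul_vecMulVec, mul_smul_comm, mul_one, trace_smul,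
    smul_eq_mul] using h

theorem Smeas_eq_sqrt_two_mul (ρ : Matrix (Fin 2 × Fin 2) (Fin 2 × Fin 2) ℂ) :
    Smeas ρ = √2 * ((star bellPhiPlus ⬝ᵥ ρ *ᵥ bellPhiPlus).re -
      (star bellPsiMinus ⬝ᵥ ρ *ᵥ bellPsiMinus).re) := by
  rw [Smeas, Shat_eq_sqrt_two_smul, sigX_kronecker_sigX_add_sigZ_kronecker_sigZ, mul_smul_comm,
    trace_smul, mul_sub, trace_sub, trace_mul_vecMulVec, trace_mul_vecMulVec, smul_eq_mul,
    Complex.re_ofReal_mul, Complex.sub_re]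

theorem abs_Smeas_le {ρ : Matrix (Fin 2 × Fin 2) (Fin 2 × Fin 2) ℂ} (hρ : ρ.PosSemidef)
    (htr : ρ.trace = 1) : |Smeas ρ| ≤ 2 * √2 := by
  have hsum := congrArg Complex.re (sum_bell_dotProduct_mulVec_eq_two_mul_trace ρ)
  simp only [Complex.add_re, htr, mul_one, Complex.re_ofNat] at hsum
  have hnonneg : ∀ x, 0 ≤ (star x ⬝ᵥ ρ *ᵥ x).re := hρ.re_dotProduct_nonneg
  rw [Smeas_eq_sqrt_two_mul, abs_mul, abs_of_nonneg (Real.sqrt_nonneg 2), mul_comm]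
  gcongr
  rw [abs_le]
  constructor <;> linarith [hnonneg bellPhiPlus, hnonneg bellPsiMinus, hnonneg bellPhiMinus,
    hnonneg bellPsiPlus]

theorem Smeas_vecMulVec (a : Fin 2 × Fin 2 → ℂ) :
    Smeas (vecMulVec a (star a)) =
      √2 * (Complex.normSq (star bellPhiPlus ⬝ᵥ a) - Complex.normSq (star bellPsiMinus ⬝ᵥ a)) := by
  rw [Smeas_eq_sqrt_two_mul, star_dotProduct_vecMulVec_mulVec, star_dotProduct_vecMulVec_mulVec]
  simp [Complex.mul_conj]

theorem Smeas_phiPlus : Smeas (vecMulVec phiPlus (star phiPlus)) = 2 * √2 := by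
  rw [Smeas_vecMulVec, phiPlus_eq_inv_sqrt_two_smul, dotProduct_smul, dotProduct_smul,
    star_bellPhiPlus_dotProduct_self, star_bellPsiMinus_dotProduct_bellPhiPlus, smul_zero,
    smul_eq_mul, inv_sqrt_two_mul_two]
  simp [mul_comm]

theorem Smeas_psiMinus : Smeas (vecMulVec psiMinus (star psiMinus)) = -(2 * √2) := by
  rw [Smeas_vecMulVec, psiMinus_eq_inv_sqrt_two_smul, dotProduct_smul, dotProduct_smul,
    star_bellPsiMinus_dotProduct_self, star_bellPhiPlus_dotProduct_bellPsiMinus, smul_zero,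
    smul_eq_mul, inv_sqrt_two_mul_two]
  simp [mul_comm]

/-- The CHSH measure satisfies `−2√2 ≤ S(ρ) ≤ 2√2` for every two-qubit density matrix,
with the maximum `2√2` attained at `|Φ⁺⟩⟨Φ⁺|` and the minimum `−2√2` at `|Ψ⁻⟩⟨Ψ⁻|`. -/
theorem chsh_range_and_extremizers :
    (∀ ρ : Matrix (Fin 2 × Fin 2) (Fin 2 × Fin 2) ℂ, ρ.PosSemidef → ρ.trace = 1 →
      -(2 * Real.sqrt 2) ≤ Smeas ρ ∧ Smeas ρ ≤ 2 * Real.sqrt 2) ∧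
    Smeas (vecMulVec phiPlus (star phiPlus)) = 2 * Real.sqrt 2 ∧
    Smeas (vecMulVec psiMinus (star psiMinus)) = -(2 * Real.sqrt 2) :=
  ⟨fun _ hρ htr => abs_le.mp (abs_Smeas_le hρ htr), Smeas_phiPlus, Smeas_psiMinus⟩
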